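/- arXiv:2409.13800 — 2 statements merged into one kernel-verified Lean document; each statement's English description precedes it below -/
import Mathlib

section
/- Let φ : ℝⁿ → ℝⁿ be a smooth diffeomorphism with Jacobian determinant Jφ = det(∇φ). Then the Piola identity holds: DIV( Jφ · (∇φ⁻¹ ∘ φ) ) = 0, i.e. for each spatial index a, ∂/∂X^A [ Jφ(X) · (∂(φ⁻¹)^A/∂x^a)(φ(X)) ] = 0 for all X. -/
open scoped BigOperators

/-- Partial derivative of a scalar field on `ℝⁿ` in the `i`-th coordinate direction. -/
noncomputable def pd {n : ℕ} (i : Fin n) (f : (Fin n → ℝ) → ℝ) (x : Fin n → ℝ) : ℝ :=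
  fderiv ℝ f x (Pi.single i 1)

/-- Jacobian matrix of a map `ℝⁿ → ℝⁿ`: entry `(i, j)` is `∂φ^i/∂x^j`. -/
noncomputable def jac {n : ℕ} (φ : (Fin n → ℝ) → (Fin n → ℝ)) (x : Fin n → ℝ) :
    Matrix (Fin n) (Fin n) ℝ :=
  Matrix.of fun i j => pd j (fun y => φ y i) x

/-- Jacobian determinant `Jφ = det ∇φ`. -/
noncomputable def Jdet {n : ℕ} (φ : (Fin n → ℝ) → (Fin n → ℝ)) (x : Fin n → ℝ) : ℝ :=
  (jac φ x).det

/-!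
Since `ψ ∘ φ = id`, the chain rule gives `(∇ψ ∘ φ) · ∇φ = 1`, so `Jφ · (∇ψ ∘ φ)` is the
adjugate of `∇φ`, whose entries `adj(∇φ)^A_a = det(∇φ with row a replaced by e_A)` involve no
inverse. Differentiating this determinant row by row, `∑_A ∂_A adj(∇φ)^A_a` becomes a sum over
the rows `b ≠ a` of `∑_{A,B} ∂_A ∂_B φ^b · det(∇φ with rows a, b replaced by e_A, e_B)`: an array
symmetric in `(A, B)` by equality of mixed partials, contracted against one that is antisymmetric
because the determinant is alternating.
-/

open Matrix

theorem sum_sum_mul_eq_zero_of_symm_of_antisymm {ι R : Type*} [Fintype ι] [CommRing R]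
    [NoZeroDivisors R] [CharZero R] {s t : ι → ι → R} (hs : ∀ i j, s i j = s j i)
    (ht : ∀ i j, t i j = -t j i) : ∑ i, ∑ j, s i j * t i j = 0 := by
  rw [← CharZero.eq_neg_self_iff]
  conv_lhs => rw [Finset.sum_comm]
  simp only [← Finset.sum_neg_distrib]
  refine Finset.sum_congr rfl fun i _ => Finset.sum_congr rfl fun j _ => ?_
  rw [hs j i, ht j i, mul_neg]

section

variable {ι R : Type*} [Fintype ι] [DecidableEq ι] [CommRing R]

theorem det_updateRow_updateRow_swap (M : Matrix ι ι R) {a b : ι} (hab : a ≠ b) (u v : ι → R) :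
    ((M.updateRow a u).updateRow b v).det = -((M.updateRow a v).updateRow b u).det := by
  have hswap : (M.updateRow a u).updateRow b v
      = ((M.updateRow a v).updateRow b u).submatrix (Equiv.swap a b) id := by
    ext i j
    rcases eq_or_ne i a with rfl | hia
    · simp [updateRow_apply, hab]
    rcases eq_or_ne i b with rfl | hib
    · simp [updateRow_apply, hab]
    · simp [updateRow_apply, hia, hib, Equiv.swap_apply_of_ne_of_ne]
  rw [hswap, det_permute, Equiv.Perm.sign_swap hab]
  simp

theorem det_updateRow_eq_sum (M : Matrix ι ι R) (b : ι) (v : ι → R) :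
    (M.updateRow b v).det = ∑ B, v B * (M.updateRow b (Pi.single B 1)).det := by
  calc (M.updateRow b v).det = (M.updateRow b (∑ B, v B • Pi.single B 1)).det := by
        congr; ext; simp [Finset.sum_apply, Pi.single_apply]
    _ = ∑ B, (M.updateRow b (v B • Pi.single B 1)).det :=
        (detRowAlternating : (ι → R) [⋀^ι]→ₗ[R] R).map_update_sum _ b _ M
    _ = _ := by simp only [det_updateRow_smul]

theorem sum_det_updateRow_updateRow_eq_zero [NoZeroDivisors R] [CharZero R] (M : Matrix ι ι R)
    {a b : ι} (hab : a ≠ b) {H : Matrix ι ι R} (hH : H.IsSymm) :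
    ∑ A, ((M.updateRow a (Pi.single A 1)).updateRow b (H A)).det = 0 := by
  rw [Finset.sum_congr rfl fun A _ => det_updateRow_eq_sum _ b (H A)]
  exact sum_sum_mul_eq_zero_of_symm_of_antisymm (fun A B => (hH.apply A B).symm)
    fun A B => det_updateRow_updateRow_swap M hab _ _

theorem adjugate_eq_det_smul_of_mul_eq_one {M N : Matrix ι ι R} (h : N * M = 1) :
    adjugate M = M.det • N :=
  calc adjugate M = N * M * adjugate M := by rw [h, Matrix.one_mul]
    _ = M.det • N := by rw [Matrix.mul_assoc, mul_adjugate, Matrix.mul_smul, Matrix.mul_one]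

end

section DetDerivative

variable {𝕜 : Type*} [NontriviallyNormedField 𝕜] {ι : Type*} [Fintype ι] [DecidableEq ι]
  {E : Type*} [NormedAddCommGroup E] [NormedSpace 𝕜 E]

variable (𝕜 ι) in
noncomputable def detRowContinuousMultilinear :
    ContinuousMultilinearMap 𝕜 (fun _ : ι => ι → 𝕜) 𝕜 where
  toMultilinearMap := (detRowAlternating : (ι → 𝕜) [⋀^ι]→ₗ[𝕜] 𝕜).toMultilinearMap
  cont := continuous_id.matrix_det

theorem fderiv_det_apply {M : E → Matrix ι ι 𝕜} {M' : ι → E →L[𝕜] (ι → 𝕜)} {x : E}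
    (hM : ∀ i, HasFDerivAt (fun y => M y i) (M' i) x) (v : E) :
    fderiv 𝕜 (fun y => (M y).det) x v = ∑ i, ((M x).updateRow i (M' i v)).det := by
  have h : HasFDerivAt (fun y => (M y).det) _ x :=
    HasFDerivAt.multilinear_comp (detRowContinuousMultilinear 𝕜 ι) hM
  rw [h.fderiv]
  simp only [_root_.sum_apply]
  rfl

end DetDerivative

section Jacobian

variable {n : ℕ}

theorem jac_eq_toMatrix' {f : (Fin n → ℝ) → (Fin n → ℝ)} {Y : Fin n → ℝ}
    (hf : DifferentiableAt ℝ f Y) :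
    jac f Y = LinearMap.toMatrix' (fderiv ℝ f Y : (Fin n → ℝ) →ₗ[ℝ] (Fin n → ℝ)) := by
  ext i j
  rw [LinearMap.toMatrix'_apply]
  exact congrArg (· (Pi.single j 1)) (fderiv_apply hf i)

theorem jac_comp {φ ψ : (Fin n → ℝ) → (Fin n → ℝ)} {Y : Fin n → ℝ}
    (hψ : DifferentiableAt ℝ ψ (φ Y)) (hφ : DifferentiableAt ℝ φ Y) :
    jac (ψ ∘ φ) Y = jac ψ (φ Y) * jac φ Y := by
  rw [jac_eq_toMatrix' (hψ.comp Y hφ), jac_eq_toMatrix' hψ, jac_eq_toMatrix' hφ,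
    fderiv_comp Y hψ hφ, ContinuousLinearMap.toLinearMap_comp, LinearMap.toMatrix'_comp]

theorem jac_id (Y : Fin n → ℝ) : jac id Y = 1 := by
  rw [jac_eq_toMatrix' differentiableAt_id, fderiv_id, ContinuousLinearMap.coe_id,
    LinearMap.toMatrix'_id]

theorem pd_pd_comm {f : (Fin n → ℝ) → ℝ} (hf : ContDiff ℝ 2 f) (A B : Fin n) (x : Fin n → ℝ) :
    pd A (pd B f) x = pd B (pd A f) x := by
  have hf' : DifferentiableAt ℝ (fderiv ℝ f) x :=
    (hf.fderiv_right (m := 1) le_rfl).differentiable one_ne_zero x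
  unfold pd
  rw [fderiv_clm_apply hf' (differentiableAt_const _),
    fderiv_clm_apply hf' (differentiableAt_const _)]
  simp only [fderiv_fun_const, Pi.zero_apply, ContinuousLinearMap.comp_zero, zero_add,
    ContinuousLinearMap.flip_apply]
  exact (hf.contDiffAt.isSymmSndFDerivAt (by simp)) _ _

theorem differentiable_pd {f : (Fin n → ℝ) → ℝ} (hf : ContDiff ℝ 2 f) (B : Fin n) :
    Differentiable ℝ (pd B f) :=
  ((hf.fderiv_right (m := 1) le_rfl).clm_apply contDiff_const).differentiable one_ne_zero

theorem hasFDerivAt_jac_row {φ : (Fin n → ℝ) → (Fin n → ℝ)} (hφ : ContDiff ℝ 2 φ) (b : Fin n)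
    (X : Fin n → ℝ) :
    HasFDerivAt (fun Y => jac φ Y b)
      (ContinuousLinearMap.pi fun B => fderiv ℝ (pd B fun y => φ y b) X) X :=
  hasFDerivAt_pi.2 fun B => (differentiable_pd (contDiff_pi.1 hφ b) B X).hasFDerivAt

theorem sum_pd_adjugate_jac_eq_zero {φ : (Fin n → ℝ) → (Fin n → ℝ)} (hφ : ContDiff ℝ 2 φ)
    (X : Fin n → ℝ) (a : Fin n) :
    ∑ A, pd A (fun Y => adjugate (jac φ Y) A a) X = 0 := by
  set D := fun b => ContinuousLinearMap.pi fun B => fderiv ℝ (pd B fun y => φ y b) X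
  have hrows : ∀ A i, HasFDerivAt (fun Y => (jac φ Y).updateRow a (Pi.single A 1) i)
      (Function.update D a 0 i) X := by
    intro A i
    rcases eq_or_ne i a with rfl | hia
    · simpa only [updateRow_self, Function.update_self] using hasFDerivAt_const _ _
    · simpa only [updateRow_ne hia, Function.update_of_ne hia] using hasFDerivAt_jac_row hφ i X
  have hpd : ∀ A, pd A (fun Y => adjugate (jac φ Y) A a) X = ∑ b,
      (((jac φ X).updateRow a (Pi.single A 1)).updateRow b
        (Function.update D a 0 b (Pi.single A 1))).det := fun A => by
    simp only [pd, adjugate_apply]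
    exact fderiv_det_apply (hrows A) _
  rw [Finset.sum_congr rfl fun A _ => hpd A, Finset.sum_comm]
  refine Finset.sum_eq_zero fun b _ => ?_
  rcases eq_or_ne b a with rfl | hba
  · refine Finset.sum_eq_zero fun A _ => det_eq_zero_of_row_eq_zero b fun B => ?_
    simp
  · simp only [Function.update_of_ne hba]
    exact sum_det_updateRow_updateRow_eq_zero _ hba.symm
      (H := Matrix.of fun A B => pd A (pd B fun y => φ y b) X)
      (IsSymm.ext fun A B => pd_pd_comm (contDiff_pi.1 hφ b) B A X)

end Jacobian

theorem piola_identity_general {n : ℕ} (φ ψ : (Fin n → ℝ) → (Fin n → ℝ))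
    (hφ : ContDiff ℝ 2 φ) (hψ : ContDiff ℝ 2 ψ)
    (hlr : Function.LeftInverse ψ φ) :
    ∀ (X : Fin n → ℝ) (a : Fin n),
      ∑ A : Fin n, pd A (fun Y => Jdet φ Y * jac ψ (φ Y) A a) X = 0 := by
  intro X a
  have hcofactor : ∀ Y A, Jdet φ Y * jac ψ (φ Y) A a = adjugate (jac φ Y) A a := by
    intro Y A
    have hinv : jac ψ (φ Y) * jac φ Y = 1 := by
      rw [← jac_comp (hψ.differentiable two_ne_zero _) (hφ.differentiable two_ne_zero _),
        hlr.comp_eq_id, jac_id]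
    rw [adjugate_eq_det_smul_of_mul_eq_one hinv]
    rfl
  simp only [hcofactor]
  exact sum_pd_adjugate_jac_eq_zero hφ X a

/-- **Piola identity**: for a `C²` diffeomorphism `φ : ℝⁿ → ℝⁿ` with inverse `ψ`,
`DIV( Jφ · (∇φ⁻¹ ∘ φ) ) = 0`, i.e. for each spatial index `a`,
`∑_A ∂/∂X^A [ Jφ(X) · (∂(φ⁻¹)^A/∂x^a)(φ(X)) ] = 0` for all `X`. -/
theorem piola_identity {n : ℕ} (φ ψ : (Fin n → ℝ) → (Fin n → ℝ))
    (hφ : ContDiff ℝ 2 φ) (hψ : ContDiff ℝ 2 ψ)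
    (hlr : Function.LeftInverse ψ φ) (hrl : Function.RightInverse ψ φ) :
    ∀ (X : Fin n → ℝ) (a : Fin n),
      ∑ A : Fin n, pd A (fun Y => Jdet φ Y * jac ψ (φ Y) A a) X = 0 :=
  piola_identity_general φ ψ hφ hψ hlr
end

section
/- Let (u, h) be smooth solutions on Ω ⊂ ℝ² of the rotating shallow water equations with sources: h(∂_t u + u·∇u + 2ω×u) = −gh∇(h+Z) − θ_h(u+R) + b and ∂_t h + div(hu) = θ_h, with h > 0 and curl R = 2ω. Then the total energy density 𝔢 = ½h|u|² + ½g(h+Z)² satisfies ∂_t 𝔢 + div( 𝔢 u + ½ g (h² − Z²) u ) = b·u + θ_h ( g(h+Z) − u·R − ½|u|² ). -/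
/-!
With the Bernoulli function `B = ½|u|² + g(h+Z)`, the flux is `𝔢u + ½g(h² − Z²)u = B·hu` and
`∂_t 𝔢 = B ∂_t h + h u·∂_t u`. Hence
`∂_t 𝔢 + div(B·hu) = B (∂_t h + div(hu)) + h u·(∂_t u + (u·∇)u) + g h u·∇(h+Z)`,
and the right-hand side follows from the mass equation and from the momentum equation dotted
with `u`, in which the Coriolis term `2ω × u ⟂ u` drops out.
-/

open scoped BigOperators

/-- Shallow water total energy density `𝔢 = ½h|u|² + ½g(h+Z)²`. -/
noncomputable def swEnergy (g : ℝ) (Z : (Fin 2 → ℝ) → ℝ)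
    (u : ℝ → (Fin 2 → ℝ) → (Fin 2 → ℝ)) (h : ℝ → (Fin 2 → ℝ) → ℝ)
    (t : ℝ) (x : Fin 2 → ℝ) : ℝ :=
  (1/2) * h t x * (∑ i, (u t x i)^2) + (1/2) * g * (h t x + Z x)^2

section PartialDerivative

variable {n : ℕ} {i : Fin n} {f k : (Fin n → ℝ) → ℝ} {x : Fin n → ℝ}

lemma pd_eq_of_hasFDerivAt {f' : (Fin n → ℝ) →L[ℝ] ℝ} (hf : HasFDerivAt f f' x) :
    pd i f x = f' (Pi.single i 1) := by
  rw [pd, hf.fderiv]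

lemma pd_add (hf : DifferentiableAt ℝ f x) (hk : DifferentiableAt ℝ k x) :
    pd i (fun y => f y + k y) x = pd i f x + pd i k x :=
  pd_eq_of_hasFDerivAt (hf.hasFDerivAt.add hk.hasFDerivAt)

lemma pd_mul (hf : DifferentiableAt ℝ f x) (hk : DifferentiableAt ℝ k x) :
    pd i (fun y => f y * k y) x = pd i f x * k x + f x * pd i k x := by
  rw [pd_eq_of_hasFDerivAt (hf.hasFDerivAt.fun_mul hk.hasFDerivAt)]
  simp [pd]
  ring

lemma pd_const_mul (c : ℝ) (hf : DifferentiableAt ℝ f x) :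
    pd i (fun y => c * f y) x = c * pd i f x := by
  rw [pd_eq_of_hasFDerivAt (hf.hasFDerivAt.const_mul c)]
  simp [pd]

lemma pd_sq (hf : DifferentiableAt ℝ f x) :
    pd i (fun y => f y ^ 2) x = 2 * f x * pd i f x := by
  simp only [pow_two, pd_mul hf hf]
  ring

lemma pd_sum {ι : Type*} (s : Finset ι) {F : ι → (Fin n → ℝ) → ℝ}
    (hF : ∀ j ∈ s, DifferentiableAt ℝ (F j) x) :
    pd i (fun y => ∑ j ∈ s, F j y) x = ∑ j ∈ s, pd i (F j) x := by
  rw [pd_eq_of_hasFDerivAt (HasFDerivAt.fun_sum fun j hj => (hF j hj).hasFDerivAt)]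
  simp [pd]

end PartialDerivative

section Slices

variable {𝕜 E F G : Type*} [NontriviallyNormedField 𝕜]
  [NormedAddCommGroup E] [NormedSpace 𝕜 E] [NormedAddCommGroup F] [NormedSpace 𝕜 F]
  [NormedAddCommGroup G] [NormedSpace 𝕜 G] {f : E × F → G}

lemma Differentiable.differentiableAt_left_slice (hf : Differentiable 𝕜 f) (a : E) (b : F) :
    DifferentiableAt 𝕜 (fun s => f (s, b)) a :=
  hf.differentiableAt.comp a (differentiableAt_id.prodMk (differentiableAt_const b))

lemma Differentiable.differentiableAt_right_slice (hf : Differentiable 𝕜 f) (a : E) (b : F) :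
    DifferentiableAt 𝕜 (fun s => f (a, s)) b :=
  hf.differentiableAt.comp b ((differentiableAt_const a).prodMk differentiableAt_id)

end Slices

noncomputable def swBernoulli (g : ℝ) (Z : (Fin 2 → ℝ) → ℝ)
    (u : ℝ → (Fin 2 → ℝ) → (Fin 2 → ℝ)) (h : ℝ → (Fin 2 → ℝ) → ℝ)
    (t : ℝ) (x : Fin 2 → ℝ) : ℝ :=
  (1/2) * ∑ i, (u t x i)^2 + g * (h t x + Z x)

section ShallowWater

variable {g : ℝ} {Z : (Fin 2 → ℝ) → ℝ} {u : ℝ → (Fin 2 → ℝ) → (Fin 2 → ℝ)}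
  {h : ℝ → (Fin 2 → ℝ) → ℝ} {t : ℝ} {x : Fin 2 → ℝ}

lemma swEnergy_flux_eq (j : Fin 2) (y : Fin 2 → ℝ) :
    swEnergy g Z u h t y * u t y j + (1/2) * g * ((h t y)^2 - (Z y)^2) * u t y j
      = swBernoulli g Z u h t y * (h t y * u t y j) := by
  simp only [swEnergy, swBernoulli]
  ring

lemma hasDerivAt_swEnergy {h' : ℝ} {u' : Fin 2 → ℝ}
    (hh : HasDerivAt (fun τ => h τ x) h' t)
    (hu : ∀ i, HasDerivAt (fun τ => u τ x i) (u' i) t) :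
    HasDerivAt (fun τ => swEnergy g Z u h τ x)
      (swBernoulli g Z u h t x * h' + h t x * ∑ i, u t x i * u' i) t := by
  have hkin := (hh.const_mul (1/2)).fun_mul
    (HasDerivAt.fun_sum (u := Finset.univ) fun i _ => (hu i).fun_pow 2)
  have hpot := ((hh.add_const (Z x)).fun_pow 2).const_mul ((1/2) * g)
  refine (hkin.add hpot).congr_deriv ?_
  simp only [swBernoulli, Fin.sum_univ_two]
  ring

lemma pd_swBernoulli (j : Fin 2) (hZ : DifferentiableAt ℝ Z x)
    (hh : DifferentiableAt ℝ (fun y => h t y) x)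
    (hu : ∀ i, DifferentiableAt ℝ (fun y => u t y i) x) :
    pd j (swBernoulli g Z u h t) x
      = ∑ i, u t x i * pd j (fun y => u t y i) x + g * pd j (fun y => h t y + Z y) x := by
  unfold swBernoulli
  rw [pd_add (by fun_prop) (by fun_prop), pd_const_mul _ (by fun_prop),
    pd_const_mul _ (by fun_prop),
    pd_sum (F := fun i y => u t y i ^ 2) _ fun i _ => (hu i).pow 2]
  simp only [pd_sq (hu _), Finset.mul_sum]
  ring_nf

lemma pd_swEnergy_flux (j : Fin 2) (hZ : DifferentiableAt ℝ Z x)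
    (hh : DifferentiableAt ℝ (fun y => h t y) x)
    (hu : ∀ i, DifferentiableAt ℝ (fun y => u t y i) x) :
    pd j (fun y => swEnergy g Z u h t y * u t y j
        + (1/2) * g * ((h t y)^2 - (Z y)^2) * u t y j) x
      = pd j (swBernoulli g Z u h t) x * (h t x * u t x j)
        + swBernoulli g Z u h t x * pd j (fun y => h t y * u t y j) x := by
  have hB : DifferentiableAt ℝ (swBernoulli g Z u h t) x := by
    unfold swBernoulli
    fun_prop
  simp_rw [swEnergy_flux_eq]
  exact pd_mul hB (hh.mul (hu j))

end ShallowWater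

-- Dotting the momentum equation with `u` annihilates the Coriolis term `2ω × u`.
lemma sum_mul_eq_of_rotating_momentum {η ω : ℝ} {u a F : Fin 2 → ℝ}
    (hmom : ∀ i, η * (a i + (if i = 0 then -(2 * ω * u 1) else 2 * ω * u 0)) = F i) :
    η * ∑ i, u i * a i = ∑ i, u i * F i := by
  have h₀ := hmom 0
  have h₁ := hmom 1
  simp only [Fin.sum_univ_two, Fin.isValue, if_true, one_ne_zero, if_false] at h₀ h₁ ⊢
  linear_combination u 0 * h₀ + u 1 * h₁

theorem shallow_water_energy_balance_general
    (g ω : ℝ)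
    (Z : (Fin 2 → ℝ) → ℝ) (R : (Fin 2 → ℝ) → (Fin 2 → ℝ))
    (u b : ℝ → (Fin 2 → ℝ) → (Fin 2 → ℝ)) (h θ : ℝ → (Fin 2 → ℝ) → ℝ)
    (hZ : ContDiff ℝ 1 Z)
    (hu : ∀ i, ContDiff ℝ 1 (fun p : ℝ × (Fin 2 → ℝ) => u p.1 p.2 i))
    (hh : ContDiff ℝ 1 (fun p : ℝ × (Fin 2 → ℝ) => h p.1 p.2))
    (hmom : ∀ t x (i : Fin 2),
      h t x * (deriv (fun τ => u τ x i) t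
          + (∑ j, u t x j * pd j (fun y => u t y i) x)
          + (if i = 0 then -(2 * ω * u t x 1) else 2 * ω * u t x 0))
      = - g * h t x * pd i (fun y => h t y + Z y) x
          - θ t x * (u t x i + R x i) + b t x i)
    (hmass : ∀ t x,
      deriv (fun τ => h τ x) t + ∑ j, pd j (fun y => h t y * u t y j) x = θ t x) :
    ∀ t x,
      deriv (fun τ => swEnergy g Z u h τ x) t
        + ∑ j, pd j (fun y =>
            swEnergy g Z u h t y * u t y j
              + (1/2) * g * ((h t y)^2 - (Z y)^2) * u t y j) x
      = (∑ i, b t x i * u t x i)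
        + θ t x * (g * (h t x + Z x) - (∑ i, u t x i * R x i)
            - (1/2) * ∑ i, (u t x i)^2) := by
  intro t x
  have hZx := hZ.differentiable one_ne_zero x
  have hht := (hh.differentiable one_ne_zero).differentiableAt_left_slice t x
  have hhx := (hh.differentiable one_ne_zero).differentiableAt_right_slice t x
  have hut i := ((hu i).differentiable one_ne_zero).differentiableAt_left_slice t x
  have hux i := ((hu i).differentiable one_ne_zero).differentiableAt_right_slice t x
  have hwork := sum_mul_eq_of_rotating_momentum (u := u t x) (hmom t x)
  rw [(hasDerivAt_swEnergy (g := g) (Z := Z) hht.hasDerivAt fun i => (hut i).hasDerivAt).deriv,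
    Finset.sum_congr rfl fun j _ => pd_swEnergy_flux j hZx hhx hux]
  simp only [pd_swBernoulli _ hZx hhx hux]
  have hmass' := hmass t x
  set B := swBernoulli g Z u h t x with hBdef
  simp only [swBernoulli, Fin.sum_univ_two] at hwork hmass' hBdef ⊢
  linear_combination hwork + B * hmass' + θ t x * hBdef

/-- Local energy balance for the rotating shallow water equations with sources:
if `h(∂_t u + u·∇u + 2ω×u) = −gh∇(h+Z) − θ_h(u+R) + b` and `∂_t h + div(hu) = θ_h`,
with `h > 0` and `curl R = 2ω`, then
`∂_t 𝔢 + div(𝔢 u + ½ g (h² − Z²) u) = b·u + θ_h(g(h+Z) − u·R − ½|u|²)`. -/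
theorem shallow_water_energy_balance
    (g ω : ℝ) (hg : 0 < g)
    (Z : (Fin 2 → ℝ) → ℝ) (R : (Fin 2 → ℝ) → (Fin 2 → ℝ))
    (u b : ℝ → (Fin 2 → ℝ) → (Fin 2 → ℝ)) (h θ : ℝ → (Fin 2 → ℝ) → ℝ)
    (hZ : ContDiff ℝ 1 Z) (hR : ∀ i, ContDiff ℝ 1 (fun y => R y i))
    (hu : ∀ i, ContDiff ℝ 1 (fun p : ℝ × (Fin 2 → ℝ) => u p.1 p.2 i))
    (hh : ContDiff ℝ 1 (fun p : ℝ × (Fin 2 → ℝ) => h p.1 p.2))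
    (hpos : ∀ t x, 0 < h t x)
    (hcurl : ∀ x, pd 0 (fun y => R y 1) x - pd 1 (fun y => R y 0) x = 2 * ω)
    (hmom : ∀ t x (i : Fin 2),
      h t x * (deriv (fun τ => u τ x i) t
          + (∑ j, u t x j * pd j (fun y => u t y i) x)
          + (if i = 0 then -(2 * ω * u t x 1) else 2 * ω * u t x 0))
      = - g * h t x * pd i (fun y => h t y + Z y) x
          - θ t x * (u t x i + R x i) + b t x i)
    (hmass : ∀ t x,
      deriv (fun τ => h τ x) t + ∑ j, pd j (fun y => h t y * u t y j) x = θ t x) :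
    ∀ t x,
      deriv (fun τ => swEnergy g Z u h τ x) t
        + ∑ j, pd j (fun y =>
            swEnergy g Z u h t y * u t y j
              + (1/2) * g * ((h t y)^2 - (Z y)^2) * u t y j) x
      = (∑ i, b t x i * u t x i)
        + θ t x * (g * (h t x + Z x) - (∑ i, u t x i * R x i)
            - (1/2) * ∑ i, (u t x i)^2) :=
  shallow_water_energy_balance_general g ω Z R u b h θ hZ hu hh hmom hmass
end
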